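/- Higher order MMDs are increasingly fine: let X and Y be discrete-time stochastic processes with paths in S₁ = E^{T+1}, possibly defined on different probability spaces, and let n > 1. If the n-th order MMD vanishes, Dⁿ(X,Y) = ‖μⁿ_X − μⁿ_Y‖_{H_n} = 0, then Dᵏ(X,Y) = 0 for every k with 1 ≤ k < n; in particular ℙ_X = ℙ_Y. (This is Theorem 3.4 of the paper, with the signature kernels replaced by an arbitrary recursive family of continuous characteristic feature maps.) -/

import Mathlib

open MeasureTheory Filter

/-- A map `κ : Ω → Measure S` is a regular conditional distribution of the random element
`Z : Ω → S` given the σ-algebra generated by `W : Ω → β`, with respect to the probability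
measure `P`. -/
def IsRegCondDistrib {Ω S β : Type*} [MeasurableSpace Ω] [MeasurableSpace S]
    [MeasurableSpace β] (P : Measure Ω) (Z : Ω → S) (W : Ω → β) (κ : Ω → Measure S) : Prop :=
  (∀ ω, IsProbabilityMeasure (κ ω)) ∧
    Measurable[MeasurableSpace.comap W inferInstance] κ ∧
    ∀ A : Set Ω, MeasurableSet[MeasurableSpace.comap W inferInstance] A →
      ∀ B : Set S, MeasurableSet B → ∫⁻ ω in A, κ ω B ∂P = P (A ∩ Z ⁻¹' B)

/-- The history of the path-valued map `X : Ω → E^{T+1}` up to time `t`. -/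
def hist {Ω E : Type*} (T : ℕ) (X : Ω → (Fin (T + 1) → E)) (t : Fin (T + 1)) :
    Ω → ({s : Fin (T + 1) // s ≤ t} → E) :=
  fun ω s => X ω s.1

/-- The compact sets `K_m` of the recursive construction: `K₁` is the closed convex hull of the
range of `φ₁ : S₁ → H₁`, and `K_{m+1}` is the closed convex hull of the image under
`φ_{m+1} : S_{m+1} → H_{m+1}` of `S_{m+1} = K_m^{T+1}`.  (Here `Kset φ₁ φ' j` is the paper's
`K_{j+1} ⊆ H_{j+1}`, `H (j)` being the paper's `H_{j+1}` and `φ' j` the paper's `φ_{j+2}`.) -/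
noncomputable def Kset {E : Type*} {T : ℕ}
    {H : ℕ → Type*} [∀ j, NormedAddCommGroup (H j)] [∀ j, InnerProductSpace ℝ (H j)]
    (φ₁ : (Fin (T + 1) → E) → H 0) (φ' : ∀ j, (Fin (T + 1) → H j) → H (j + 1)) :
    (j : ℕ) → Set (H j)
  | 0 => closure (convexHull ℝ (Set.range φ₁))
  | j + 1 => closure (convexHull ℝ (φ' j '' {f | ∀ t, f t ∈ Kset φ₁ φ' j}))

/-- The `(k+1)`-st order kernel mean embedding of the process `X` with predictive KMEs `Φ`:
`kmeSeq … 0 = μ¹_X = M₁(ℙ_X)` and `kmeSeq … (k+1) = μ^{k+2}_X = M_{k+2}(law of Φ^{k+1}_X)`,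
where `Φ k` is the `(k+1)`-st order predictive KME of `X`. -/
noncomputable def kmeSeq {Ω E : Type*} [MeasurableSpace Ω] [MeasurableSpace E] {T : ℕ}
    {H : ℕ → Type*} [∀ j, NormedAddCommGroup (H j)] [∀ j, InnerProductSpace ℝ (H j)]
    [∀ j, MeasurableSpace (H j)]
    (φ₁ : (Fin (T + 1) → E) → H 0) (φ' : ∀ j, (Fin (T + 1) → H j) → H (j + 1))
    (P : Measure Ω) (X : Ω → (Fin (T + 1) → E)) (Φ : ∀ j, Ω → (Fin (T + 1) → H j)) :
    (k : ℕ) → H k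
  | 0 => ∫ x, φ₁ x ∂(P.map X)
  | k + 1 => ∫ y, φ' k y ∂(P.map (Φ k))


section Aux
set_option linter.unusedSectionVars false

open ProbabilityTheory

variable {E : Type*} [MetricSpace E] [CompactSpace E] [MeasurableSpace E] [BorelSpace E]
  {T : ℕ}
  {H : ℕ → Type*} [∀ j, NormedAddCommGroup (H j)] [∀ j, InnerProductSpace ℝ (H j)]
  [∀ j, CompleteSpace (H j)] [∀ j, SecondCountableTopology (H j)]
  [∀ j, MeasurableSpace (H j)] [∀ j, BorelSpace (H j)]
  {φ₁ : (Fin (T + 1) → E) → H 0} {φ' : ∀ j, (Fin (T + 1) → H j) → H (j + 1)}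

/-- Tower property for a regular conditional distribution: averaging the conditional
Bochner integrals recovers the unconditional integral. -/
theorem tower_aux {Ω S β Hs : Type*} [MeasurableSpace Ω] [MeasurableSpace S] [MeasurableSpace β]
    [NormedAddCommGroup Hs] [NormedSpace ℝ Hs]
    (P : Measure Ω) [IsProbabilityMeasure P] {Z : Ω → S} (hZ : Measurable Z)
    {W : Ω → β} (hW : Measurable W) {κ : Ω → Measure S}
    (hκ : IsRegCondDistrib P Z W κ) {g : S → Hs} (hg : Integrable g (P.map Z)) :
    ∫ ω, ∫ y, g y ∂(κ ω) ∂P = ∫ y, g y ∂(P.map Z) := by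
  have hκm : Measurable κ := hκ.2.1.mono hW.comap_le le_rfl
  let K : Kernel Ω S := ⟨κ, hκm⟩
  haveI : IsMarkovKernel K := ⟨hκ.1⟩
  have hmap : (P.compProd K).map Prod.snd = P.map Z := by
    ext B hB
    rw [Measure.map_apply measurable_snd hB, Measure.map_apply hZ hB,
      Measure.compProd_apply (measurable_snd hB)]
    have h := hκ.2.2 Set.univ MeasurableSet.univ B hB
    rw [Measure.restrict_univ, Set.univ_inter] at h
    exact h
  have hgm : AEStronglyMeasurable g (P.map Z) := hg.aestronglyMeasurable
  have hgm' : AEStronglyMeasurable g ((P.compProd K).map Prod.snd) := hmap ▸ hgm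
  have hint : Integrable (fun z : Ω × S => g z.2) (P.compProd K) :=
    (integrable_map_measure hgm' measurable_snd.aemeasurable).mp (hmap ▸ hg)
  calc ∫ ω, ∫ y, g y ∂(κ ω) ∂P = ∫ z, g z.2 ∂(P.compProd K) :=
        (Measure.integral_compProd hint).symm
    _ = ∫ y, g y ∂((P.compProd K).map Prod.snd) :=
        (integral_map measurable_snd.aemeasurable hgm').symm
    _ = ∫ y, g y ∂(P.map Z) := by rw [hmap]

theorem measurable_hist {Ω : Type*} [MeasurableSpace Ω] {X : Ω → (Fin (T + 1) → E)}
    (hX : Measurable X) (t : Fin (T + 1)) : Measurable (hist T X t) :=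
  measurable_pi_lambda _ fun s => (measurable_pi_apply s.1).comp hX

theorem isClosed_Kset : ∀ j, IsClosed (Kset φ₁ φ' j) := by
  intro j; cases j <;> exact isClosed_closure

theorem isCompact_Kset (hφ₁c : Continuous φ₁)
    (hφ'c : ∀ j, ContinuousOn (φ' j) {f | ∀ t, f t ∈ Kset φ₁ φ' j}) :
    ∀ j, IsCompact (Kset φ₁ φ' j) := by
  have cc : ∀ {j : ℕ} {s : Set (H j)}, IsCompact s → IsCompact (closure (convexHull ℝ s)) :=
    fun hs => TotallyBounded.isCompact_of_isClosed
      ((totallyBounded_convexHull.mpr hs.totallyBounded).closure) isClosed_closure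
  intro j
  induction j with
  | zero => exact cc (isCompact_range hφ₁c)
  | succ j ih =>
    have hS : IsCompact {f : Fin (T + 1) → H j | ∀ t, f t ∈ Kset φ₁ φ' j} := by
      have h := isCompact_univ_pi (fun _ : Fin (T + 1) => ih)
      convert h using 1
      ext f; simp [Set.mem_pi]
    exact cc (hS.image_of_continuousOn (hφ'c j))

theorem isCompact_pathSet (hφ₁c : Continuous φ₁)
    (hφ'c : ∀ j, ContinuousOn (φ' j) {f | ∀ t, f t ∈ Kset φ₁ φ' j}) (j : ℕ) :
    IsCompact {f : Fin (T + 1) → H j | ∀ t, f t ∈ Kset φ₁ φ' j} := by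
  have h := isCompact_univ_pi (fun _ : Fin (T + 1) => isCompact_Kset hφ₁c hφ'c j)
  convert h using 1
  ext f; simp [Set.mem_pi]

theorem isClosed_pathSet (j : ℕ) :
    IsClosed {f : Fin (T + 1) → H j | ∀ t, f t ∈ Kset φ₁ φ' j} := by
  have h := isClosed_set_pi (i := (Set.univ : Set (Fin (T + 1))))
    (s := fun _ => Kset φ₁ φ' j) (fun a _ => isClosed_Kset j)
  convert h using 1
  ext f; simp [Set.mem_pi]

theorem integrable_phi1 (hφ₁c : Continuous φ₁) (μ : Measure (Fin (T + 1) → E))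
    [IsFiniteMeasure μ] : Integrable φ₁ μ := by
  obtain ⟨C, hC⟩ := isBounded_iff_forall_norm_le.mp (isCompact_range hφ₁c).isBounded
  exact (integrable_const C).mono' hφ₁c.aestronglyMeasurable
    (Filter.Eventually.of_forall fun x => hC _ (Set.mem_range_self x))

theorem integrable_phi' (hφ₁c : Continuous φ₁)
    (hφ'c : ∀ j, ContinuousOn (φ' j) {f | ∀ t, f t ∈ Kset φ₁ φ' j}) (j : ℕ)
    (μ : Measure (Fin (T + 1) → H j)) [IsProbabilityMeasure μ]
    (hmem : ∀ᵐ f ∂μ, ∀ t, f t ∈ Kset φ₁ φ' j) : Integrable (φ' j) μ := by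
  have hSm := (isClosed_pathSet (φ₁ := φ₁) (φ' := φ') j).measurableSet
  have hasm : AEStronglyMeasurable (φ' j) μ := by
    have h := (hφ'c j).aestronglyMeasurable (μ := μ) hSm
    have heq : μ.restrict {f : Fin (T + 1) → H j | ∀ t, f t ∈ Kset φ₁ φ' j} = μ :=
      Measure.restrict_eq_self_of_ae_mem hmem
    rwa [heq] at h
  obtain ⟨C, hC⟩ := isBounded_iff_forall_norm_le.mp
    (((isCompact_pathSet hφ₁c hφ'c j).image_of_continuousOn (hφ'c j)).isBounded)
  exact (integrable_const C).mono' hasm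
    (by filter_upwards [hmem] with f hf using hC _ ⟨f, hf, rfl⟩)

variable {Ω : Type*} [MeasurableSpace Ω] (P : Measure Ω) [IsProbabilityMeasure P]
  {X : Ω → (Fin (T + 1) → E)} (hX : Measurable X)
  {ΦX : ∀ j, Ω → (Fin (T + 1) → H j)} (hΦXm : ∀ j, Measurable (ΦX j))
  {κX₀ : Fin (T + 1) → Ω → Measure (Fin (T + 1) → E)}
  (hκX₀ : ∀ t, IsRegCondDistrib P X (hist T X t) (κX₀ t))
  (hΦX₀ : ∀ ω t, ΦX 0 ω t = ∫ x, φ₁ x ∂(κX₀ t ω))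
  {κX : ∀ j, Fin (T + 1) → Ω → Measure (Fin (T + 1) → H j)}
  (hκX : ∀ j t, IsRegCondDistrib P (ΦX j) (hist T X t) (κX j t))
  (hΦX : ∀ j ω t, ΦX (j + 1) ω t = ∫ y, φ' j y ∂(κX j t ω))

include hX hΦXm hκX₀ hΦX₀ hκX hΦX

theorem mem_Kset_ae (hφ₁c : Continuous φ₁)
    (hφ'c : ∀ j, ContinuousOn (φ' j) {f | ∀ t, f t ∈ Kset φ₁ φ' j}) :
    ∀ j, ∀ᵐ ω ∂P, ∀ t, ΦX j ω t ∈ Kset φ₁ φ' j := by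
  intro j
  induction j with
  | zero =>
    refine Filter.Eventually.of_forall fun ω t => ?_
    rw [hΦX₀ ω t]
    haveI := (hκX₀ t).1 ω
    exact Convex.integral_mem ((convex_convexHull ℝ _).closure) isClosed_closure
      (Filter.Eventually.of_forall fun x =>
        subset_closure (subset_convexHull ℝ _ (Set.mem_range_self x)))
      (integrable_phi1 hφ₁c _)
  | succ j ih =>
    set S : Set (Fin (T + 1) → H j) := {f | ∀ t, f t ∈ Kset φ₁ φ' j} with hS
    have hSm : MeasurableSet S := (isClosed_pathSet j).measurableSet
    have hmass : ∀ t, ∀ᵐ ω ∂P, κX j t ω S = 1 := by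
      intro t
      have hκm : Measurable (κX j t) :=
        (hκX j t).2.1.mono (measurable_hist hX t).comap_le le_rfl
      have hf : Measurable fun ω => κX j t ω S := (Measure.measurable_coe hSm).comp hκm
      have h1 : P ((ΦX j) ⁻¹' S) = 1 := by
        rw [← prob_compl_eq_zero_iff ((hΦXm j) hSm)]
        exact ae_iff.mp ih
      have hint := (hκX j t).2.2 Set.univ MeasurableSet.univ S hSm
      rw [Measure.restrict_univ, Set.univ_inter, h1] at hint
      have hle : ∀ᵐ ω ∂P, κX j t ω S ≤ 1 :=
        Filter.Eventually.of_forall fun ω => by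
          haveI := (hκX j t).1 ω; exact prob_le_one
      have hsub : ∫⁻ ω, (1 - κX j t ω S) ∂P = 0 := by
        rw [lintegral_sub hf (by rw [hint]; exact ENNReal.one_ne_top) hle, hint,
          lintegral_one, measure_univ, tsub_self]
      have hz := (lintegral_eq_zero_iff (measurable_const.sub hf)).mp hsub
      filter_upwards [hz, hle] with ω h₁ h₂
      exact le_antisymm h₂ (tsub_eq_zero_iff_le.mp h₁)
    rw [← ae_all_iff] at hmass
    filter_upwards [hmass] with ω hω t
    rw [hΦX j ω t]
    haveI := (hκX j t).1 ω
    have hmem : ∀ᵐ f ∂(κX j t ω), ∀ s, f s ∈ Kset φ₁ φ' j := by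
      rw [ae_iff]
      exact (prob_compl_eq_zero_iff hSm).mpr (hω t)
    refine Convex.integral_mem ((convex_convexHull ℝ _).closure) isClosed_closure ?_
      (integrable_phi' hφ₁c hφ'c j _ hmem)
    filter_upwards [hmem] with f hf
    exact subset_closure (subset_convexHull ℝ _ ⟨f, hf, rfl⟩)

theorem law_mem (hφ₁c : Continuous φ₁)
    (hφ'c : ∀ j, ContinuousOn (φ' j) {f | ∀ t, f t ∈ Kset φ₁ φ' j}) (j : ℕ) :
    ∀ᵐ f ∂(P.map (ΦX j)), ∀ t, f t ∈ Kset φ₁ φ' j :=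
  (ae_map_iff (hΦXm j).aemeasurable (isClosed_pathSet j).measurableSet).mpr
    (mem_Kset_ae P hX hΦXm hκX₀ hΦX₀ hκX hΦX hφ₁c hφ'c j)

theorem law_mass (hφ₁c : Continuous φ₁)
    (hφ'c : ∀ j, ContinuousOn (φ' j) {f | ∀ t, f t ∈ Kset φ₁ φ' j}) (j : ℕ) :
    (P.map (ΦX j)) {f | ∀ t, f t ∈ Kset φ₁ φ' j} = 1 := by
  haveI : IsProbabilityMeasure (P.map (ΦX j)) :=
    Measure.isProbabilityMeasure_map (hΦXm j).aemeasurable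
  rw [← prob_compl_eq_zero_iff (isClosed_pathSet j).measurableSet]
  exact ae_iff.mp (law_mem P hX hΦXm hκX₀ hΦX₀ hκX hΦX hφ₁c hφ'c j)

theorem kme_eval (hφ₁c : Continuous φ₁)
    (hφ'c : ∀ j, ContinuousOn (φ' j) {f | ∀ t, f t ∈ Kset φ₁ φ' j}) (j : ℕ) :
    kmeSeq φ₁ φ' P X ΦX j = ∫ f, f (0 : Fin (T + 1)) ∂(P.map (ΦX j)) := by
  have heval : ∀ j', AEStronglyMeasurable (fun f : Fin (T + 1) → H j' => f 0)
      (P.map (ΦX j')) := fun j' => (measurable_pi_apply 0).aestronglyMeasurable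
  cases j with
  | zero =>
    haveI : IsProbabilityMeasure (P.map X) := Measure.isProbabilityMeasure_map hX.aemeasurable
    have ht := tower_aux P hX (measurable_hist hX 0) (hκX₀ 0)
      (integrable_phi1 hφ₁c (P.map X))
    rw [integral_map (hΦXm 0).aemeasurable (heval 0)]
    show ∫ x, φ₁ x ∂(P.map X) = _
    rw [← ht]
    exact (integral_congr_ae (Filter.Eventually.of_forall fun ω => (hΦX₀ ω 0))).symm
  | succ j =>
    haveI : IsProbabilityMeasure (P.map (ΦX j)) :=
      Measure.isProbabilityMeasure_map (hΦXm j).aemeasurable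
    have ht := tower_aux P (hΦXm j) (measurable_hist hX 0) (hκX j 0)
      (integrable_phi' hφ₁c hφ'c j _ (law_mem P hX hΦXm hκX₀ hΦX₀ hκX hΦX hφ₁c hφ'c j))
    rw [integral_map (hΦXm (j + 1)).aemeasurable (heval (j + 1))]
    show ∫ y, φ' j y ∂(P.map (ΦX j)) = _
    rw [← ht]
    exact (integral_congr_ae (Filter.Eventually.of_forall fun ω => (hΦX j ω 0))).symm

end Aux

/-- (Theorem 3.4 of the paper, with the signature kernels replaced by an
arbitrary recursive family of continuous characteristic feature maps.)  Higher order MMDs are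
increasingly fine: let `X, Y` be discrete-time stochastic processes with paths in
`S₁ = E^{T+1}` (`E` compact metric), possibly defined on different probability spaces, with
predictive KME towers `ΦX, ΦY` built through regular conditional distributions `κX, κY` on the
natural filtrations, and let `n > 1` (here `n = N + 1` with `N ≥ 1`; `kmeSeq … k` is the
`(k+1)`-st order KME `μ^{k+1}`).  If the `n`-th order MMD vanishes, `‖μⁿ_X - μⁿ_Y‖ = 0`, then
`Dᵏ(X, Y) = 0` for every `1 ≤ k < n`; in particular `ℙ_X = ℙ_Y`. -/
theorem higher_order_mmd_increasingly_fine
    {E : Type*} [MetricSpace E] [CompactSpace E] [MeasurableSpace E] [BorelSpace E]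
    (T : ℕ)
    {H : ℕ → Type*} [∀ j, NormedAddCommGroup (H j)] [∀ j, InnerProductSpace ℝ (H j)]
    [∀ j, CompleteSpace (H j)] [∀ j, SecondCountableTopology (H j)]
    [∀ j, MeasurableSpace (H j)] [∀ j, BorelSpace (H j)]
    (φ₁ : (Fin (T + 1) → E) → H 0) (hφ₁c : Continuous φ₁)
    (hφ₁char : ∀ μ ν : Measure (Fin (T + 1) → E), IsProbabilityMeasure μ →
      IsProbabilityMeasure ν → (∫ x, φ₁ x ∂μ) = ∫ x, φ₁ x ∂ν → μ = ν)
    (φ' : ∀ j, (Fin (T + 1) → H j) → H (j + 1))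
    (hφ'c : ∀ j, ContinuousOn (φ' j) {f | ∀ t, f t ∈ Kset φ₁ φ' j})
    (hφ'char : ∀ j, ∀ μ ν : Measure (Fin (T + 1) → H j), IsProbabilityMeasure μ →
      IsProbabilityMeasure ν →
      μ {f | ∀ t, f t ∈ Kset φ₁ φ' j} = 1 → ν {f | ∀ t, f t ∈ Kset φ₁ φ' j} = 1 →
      (∫ f, φ' j f ∂μ) = ∫ f, φ' j f ∂ν → μ = ν)
    {Ω : Type*} [MeasurableSpace Ω] (P : Measure Ω) [IsProbabilityMeasure P]
    {Ω' : Type*} [MeasurableSpace Ω'] (Q : Measure Ω') [IsProbabilityMeasure Q]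
    (X : Ω → (Fin (T + 1) → E)) (hX : Measurable X)
    (Y : Ω' → (Fin (T + 1) → E)) (hY : Measurable Y)
    (ΦX : ∀ j, Ω → (Fin (T + 1) → H j)) (hΦXm : ∀ j, Measurable (ΦX j))
    (κX₀ : Fin (T + 1) → Ω → Measure (Fin (T + 1) → E))
    (hκX₀ : ∀ t, IsRegCondDistrib P X (hist T X t) (κX₀ t))
    (hΦX₀ : ∀ ω t, ΦX 0 ω t = ∫ x, φ₁ x ∂(κX₀ t ω))
    (κX : ∀ j, Fin (T + 1) → Ω → Measure (Fin (T + 1) → H j))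
    (hκX : ∀ j t, IsRegCondDistrib P (ΦX j) (hist T X t) (κX j t))
    (hΦX : ∀ j ω t, ΦX (j + 1) ω t = ∫ y, φ' j y ∂(κX j t ω))
    (ΦY : ∀ j, Ω' → (Fin (T + 1) → H j)) (hΦYm : ∀ j, Measurable (ΦY j))
    (κY₀ : Fin (T + 1) → Ω' → Measure (Fin (T + 1) → E))
    (hκY₀ : ∀ t, IsRegCondDistrib Q Y (hist T Y t) (κY₀ t))
    (hΦY₀ : ∀ ω t, ΦY 0 ω t = ∫ x, φ₁ x ∂(κY₀ t ω))
    (κY : ∀ j, Fin (T + 1) → Ω' → Measure (Fin (T + 1) → H j))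
    (hκY : ∀ j t, IsRegCondDistrib Q (ΦY j) (hist T Y t) (κY j t))
    (hΦY : ∀ j ω t, ΦY (j + 1) ω t = ∫ y, φ' j y ∂(κY j t ω))
    (N : ℕ) (hN : 1 ≤ N)
    (h : ‖kmeSeq φ₁ φ' P X ΦX N - kmeSeq φ₁ φ' Q Y ΦY N‖ = 0) :
    (∀ k < N, ‖kmeSeq φ₁ φ' P X ΦX k - kmeSeq φ₁ φ' Q Y ΦY k‖ = 0) ∧
      P.map X = Q.map Y := by
  have hbase : kmeSeq φ₁ φ' P X ΦX N = kmeSeq φ₁ φ' Q Y ΦY N :=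
    sub_eq_zero.mp (norm_eq_zero.mp h)
  have down : ∀ j, kmeSeq φ₁ φ' P X ΦX (j + 1) = kmeSeq φ₁ φ' Q Y ΦY (j + 1) →
      kmeSeq φ₁ φ' P X ΦX j = kmeSeq φ₁ φ' Q Y ΦY j := by
    intro j hj
    have hlaw : P.map (ΦX j) = Q.map (ΦY j) := by
      haveI : IsProbabilityMeasure (P.map (ΦX j)) :=
        Measure.isProbabilityMeasure_map (hΦXm j).aemeasurable
      haveI : IsProbabilityMeasure (Q.map (ΦY j)) :=
        Measure.isProbabilityMeasure_map (hΦYm j).aemeasurable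
      refine hφ'char j _ _ inferInstance inferInstance
        (law_mass P hX hΦXm hκX₀ hΦX₀ hκX hΦX hφ₁c hφ'c j)
        (law_mass Q hY hΦYm hκY₀ hΦY₀ hκY hΦY hφ₁c hφ'c j) ?_
      exact hj
    rw [kme_eval P hX hΦXm hκX₀ hΦX₀ hκX hΦX hφ₁c hφ'c j,
      kme_eval Q hY hΦYm hκY₀ hΦY₀ hκY hΦY hφ₁c hφ'c j, hlaw]
  have main : ∀ k, kmeSeq φ₁ φ' P X ΦX k = kmeSeq φ₁ φ' Q Y ΦY k →
      ∀ j ≤ k, kmeSeq φ₁ φ' P X ΦX j = kmeSeq φ₁ φ' Q Y ΦY j := by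
    intro k
    induction k with
    | zero => intro hk j hj; rw [Nat.le_zero.mp hj]; exact hk
    | succ k ih =>
      intro hk j hj
      rcases Nat.eq_or_lt_of_le hj with rfl | hlt
      · exact hk
      · exact ih (down k hk) j (Nat.lt_succ_iff.mp hlt)
  have hall := main N hbase
  refine ⟨fun k hk => ?_, ?_⟩
  · rw [hall k hk.le, sub_self, norm_zero]
  · have h0 := hall 0 (Nat.zero_le N)
    haveI : IsProbabilityMeasure (P.map X) := Measure.isProbabilityMeasure_map hX.aemeasurable
    haveI : IsProbabilityMeasure (Q.map Y) := Measure.isProbabilityMeasure_map hY.aemeasurable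
    exact hφ₁char _ _ inferInstance inferInstance h0
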